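/- Let d_S > 0 and let Λ, β, γ, μ : [0,1] → ℝ be continuous and positive. Let S̃ : [0,1] → ℝ be twice continuously differentiable with S̃'(0) = S̃'(1) = 0 and -d_S·S̃''(x) = Λ(x) - S̃(x) on [0,1], and assume there exists x₀ ∈ [0,1] with β(x₀)·S̃(x₀) > γ(x₀) + μ(x₀). Let (dₙ) be a sequence of positive reals with dₙ → 0, and for each n let (Sₙ, Iₙ) be a pair of twice continuously differentiable positive functions on [0,1] with Sₙ'(0)=Sₙ'(1)=0, Iₙ'(0)=Iₙ'(1)=0, solving -d_S·Sₙ''(x) = Λ(x) - Sₙ(x) - β(x)·Sₙ(x)·Iₙ(x) + γ(x)·Iₙ(x) and -dₙ·Iₙ''(x) = β(x)·Sₙ(x)·Iₙ(x) - (γ(x)+μ(x))·Iₙ(x) for all x ∈ [0,1]. Then there exist a strictly increasing map φ : ℕ → ℕ, a continuous function S₀ : [0,1] → ℝ with S₀ > 0 on [0,1], and a constant I₀ > 0, such that S_{φ(n)} → S₀ uniformly on [0,1] and ∫₀¹ I_{φ(n)}(x) dx → I₀ as n → ∞. -/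

import Mathlib

/-!
Integrating both equations over `[0, 1]` (the diffusion terms vanish by the Neumann
condition) gives `∫ Sₙ + ∫ μ Iₙ = ∫ Λ`, which bounds `∫ Iₙ`. The maximum principle at the
extrema of `Sₙ` gives `min Λ (γ / β) ≤ Sₙ ≤ max Λ (γ / β)`, and the `S`-equation then bounds
`∫ |Sₙ''|`, so the `Sₙ` are uniformly Lipschitz. Arzelà–Ascoli and Bolzano–Weierstrass produce
`φ`, `S₀` and `I₀`.

If `I₀ = 0`, an energy estimate for `Sₙ - S̃` forces `S₀ = S̃`, so `β Sₙ - (γ + μ) ≥ c > 0` on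
an interval `[a, b]` around `x₀` for large `n`. Dividing the `I`-equation by `Iₙ` and testing it
against `p²`, `p = (x - a)(b - x)`, gives (Picone's identity for `Iₙ' / Iₙ`)
`c ∫ p² ≤ dₙ ∫ p'²`, which is impossible as `dₙ → 0`.
-/

open Set Filter Topology intervalIntegral
open scoped NNReal

variable {a b : ℝ}

theorem integral_eq_sub_of_hasDerivWithinAt_Icc {f f' : ℝ → ℝ} (hab : a ≤ b)
    (hf : ∀ x ∈ Icc a b, HasDerivWithinAt f (f' x) (Icc a b) x)
    (hf' : ContinuousOn f' (Icc a b)) :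
    ∫ x in a..b, f' x = f b - f a :=
  integral_eq_sub_of_hasDerivAt_of_le hab (fun x hx => (hf x hx).continuousWithinAt)
    (fun x hx => (hf x (Ioo_subset_Icc_self hx)).hasDerivAt (Icc_mem_nhds hx.1 hx.2))
    (hf'.intervalIntegrable_of_Icc hab)

theorem exists_Icc_subset_forall_lt {g : ℝ → ℝ} {x₀ c : ℝ} (hab : a < b) (hx₀ : x₀ ∈ Icc a b)
    (hg : ContinuousWithinAt g (Icc a b) x₀) (hc : c < g x₀) :
    ∃ a' b', a' < b' ∧ Icc a' b' ⊆ Icc a b ∧ ∀ x ∈ Icc a' b', c < g x := by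
  obtain ⟨ε, hε, h⟩ := Metric.mem_nhdsWithin_iff.1 (hg.eventually_const_lt hc)
  refine ⟨max a (x₀ - ε / 2), min b (x₀ + ε / 2),
    max_lt (lt_min hab (by linarith [hx₀.1])) (lt_min (by linarith [hx₀.2]) (by linarith)),
    Icc_subset_Icc (le_max_left _ _) (min_le_left _ _), fun x hx => h ⟨?_, ?_⟩⟩
  · rw [Metric.mem_ball, Real.dist_eq, abs_lt]
    constructor <;>
      linarith [le_max_right a (x₀ - ε / 2), min_le_right b (x₀ + ε / 2), hx.1, hx.2]
  · exact Icc_subset_Icc (le_max_left _ _) (min_le_left _ _) hx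

theorem HasDerivWithinAt.exists_mul_sub_neg {g : ℝ → ℝ} {g' c : ℝ} {s : Set ℝ}
    (hg : HasDerivWithinAt g g' s c) (hc : g c = 0) (hneg : g' < 0) :
    ∃ ε > 0, ∀ z ∈ s, z ≠ c → dist z c < ε → g z * (z - c) < 0 := by
  have h := (hasDerivWithinAt_iff_tendsto_slope.1 hg).eventually_lt_const hneg
  rw [eventually_nhdsWithin_iff, Metric.eventually_nhds_iff] at h
  obtain ⟨ε, hε, h⟩ := h
  refine ⟨ε, hε, fun z hz hzc hdist => ?_⟩
  have hslope := h hdist ⟨hz, hzc⟩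
  rw [slope_def_field, hc, sub_zero] at hslope
  have hzc' : z - c ≠ 0 := sub_ne_zero.2 hzc
  calc g z * (z - c) = g z / (z - c) * (z - c) ^ 2 := by field_simp
    _ < 0 := mul_neg_of_neg_of_pos hslope (by positivity)

theorem neg_integral_sq_le_integral_deriv2_div_mul_sq {u u' u'' p p' : ℝ → ℝ} (hab : a ≤ b)
    (hu : ∀ x ∈ Icc a b, HasDerivWithinAt u (u' x) (Icc a b) x)
    (hu' : ∀ x ∈ Icc a b, HasDerivWithinAt u' (u'' x) (Icc a b) x)
    (hu'' : ContinuousOn u'' (Icc a b)) (hpos : ∀ x ∈ Icc a b, 0 < u x)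
    (hp : ∀ x ∈ Icc a b, HasDerivWithinAt p (p' x) (Icc a b) x) (hp' : ContinuousOn p' (Icc a b))
    (ha : p a = 0) (hb : p b = 0) :
    -∫ x in a..b, p' x ^ 2 ≤ ∫ x in a..b, u'' x / u x * p x ^ 2 := by
  have huc : ContinuousOn u (Icc a b) := fun x hx => (hu x hx).continuousWithinAt
  have hu'c : ContinuousOn u' (Icc a b) := fun x hx => (hu' x hx).continuousWithinAt
  have hpc : ContinuousOn p (Icc a b) := fun x hx => (hp x hx).continuousWithinAt
  have hne : ∀ x ∈ Icc a b, u x ≠ 0 := fun x hx => (hpos x hx).ne'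
  have hwc : ContinuousOn (fun x => u' x / u x) (Icc a b) := hu'c.div huc hne
  -- with `w = u' / u`, pointwise `u'' / u * p² + p'² = (w p²)' + (w p - p')²`
  set D : ℝ → ℝ := fun x =>
    (u'' x * u x - u' x * u' x) / u x ^ 2 * p x ^ 2 + u' x / u x * (2 * p x * p' x)
  have hD : ∀ x ∈ Icc a b, HasDerivWithinAt (fun x => u' x / u x * p x ^ 2) (D x) (Icc a b) x :=
    fun x hx => (((hu' x hx).fun_div (hu x hx) (hne x hx)).fun_mul
      ((hp x hx).fun_pow 2)).congr_deriv (by simp only [D]; ring)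
  have hDc : ContinuousOn D (Icc a b) :=
    ((((hu''.mul huc).sub (hu'c.mul hu'c)).div (huc.pow 2)
      fun x hx => pow_ne_zero 2 (hne x hx)).mul (hpc.pow 2)).add
      (hwc.mul ((continuousOn_const.mul hpc).mul hp'))
  have hRc : ContinuousOn (fun x => (u' x / u x * p x - p' x) ^ 2) (Icc a b) :=
    ((hwc.mul hpc).sub hp').pow 2
  have hsplit : ∫ x in a..b, (u'' x / u x * p x ^ 2 + p' x ^ 2)
      = (∫ x in a..b, D x) + ∫ x in a..b, (u' x / u x * p x - p' x) ^ 2 := by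
    rw [← integral_add (hDc.intervalIntegrable_of_Icc hab) (hRc.intervalIntegrable_of_Icc hab)]
    refine integral_congr fun x hx => ?_
    rw [uIcc_of_le hab] at hx
    have := hne x hx
    simp only [D]
    field_simp
    ring
  rw [integral_add (f := fun x => u'' x / u x * p x ^ 2) (g := fun x => p' x ^ 2)
    ((hu''.div huc hne |>.mul (hpc.pow 2)).intervalIntegrable_of_Icc hab)
    ((hp'.pow 2).intervalIntegrable_of_Icc hab),
    integral_eq_sub_of_hasDerivWithinAt_Icc hab hD hDc, ha, hb] at hsplit
  simp only [zero_pow two_ne_zero, mul_zero, sub_zero, zero_add] at hsplit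
  linarith [integral_nonneg (μ := MeasureTheory.volume) hab fun x _ =>
    sq_nonneg (u' x / u x * p x - p' x)]

structure IsNeumannC2 (a b : ℝ) (f f' f'' : ℝ → ℝ) : Prop where
  hasDerivWithinAt : ∀ x ∈ Icc a b, HasDerivWithinAt f (f' x) (Icc a b) x
  hasDerivWithinAt_deriv : ∀ x ∈ Icc a b, HasDerivWithinAt f' (f'' x) (Icc a b) x
  continuousOn_deriv2 : ContinuousOn f'' (Icc a b)
  deriv_left : f' a = 0
  deriv_right : f' b = 0

namespace IsNeumannC2

variable {f f' f'' g g' g'' : ℝ → ℝ}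

theorem continuousOn (hf : IsNeumannC2 a b f f' f'') : ContinuousOn f (Icc a b) :=
  fun x hx => (hf.hasDerivWithinAt x hx).continuousWithinAt

theorem continuousOn_deriv (hf : IsNeumannC2 a b f f' f'') : ContinuousOn f' (Icc a b) :=
  fun x hx => (hf.hasDerivWithinAt_deriv x hx).continuousWithinAt

theorem neg (hf : IsNeumannC2 a b f f' f'') :
    IsNeumannC2 a b (fun x => -f x) (fun x => -f' x) (fun x => -f'' x) where
  hasDerivWithinAt x hx := (hf.hasDerivWithinAt x hx).neg
  hasDerivWithinAt_deriv x hx := (hf.hasDerivWithinAt_deriv x hx).neg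
  continuousOn_deriv2 := hf.continuousOn_deriv2.neg
  deriv_left := by simp [hf.deriv_left]
  deriv_right := by simp [hf.deriv_right]

theorem sub (hf : IsNeumannC2 a b f f' f'') (hg : IsNeumannC2 a b g g' g'') :
    IsNeumannC2 a b (fun x => f x - g x) (fun x => f' x - g' x) (fun x => f'' x - g'' x) where
  hasDerivWithinAt x hx := (hf.hasDerivWithinAt x hx).sub (hg.hasDerivWithinAt x hx)
  hasDerivWithinAt_deriv x hx :=
    (hf.hasDerivWithinAt_deriv x hx).sub (hg.hasDerivWithinAt_deriv x hx)
  continuousOn_deriv2 := hf.continuousOn_deriv2.sub hg.continuousOn_deriv2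
  deriv_left := by simp [hf.deriv_left, hg.deriv_left]
  deriv_right := by simp [hf.deriv_right, hg.deriv_right]

theorem integral_deriv2 (hf : IsNeumannC2 a b f f' f'') (hab : a ≤ b) :
    ∫ x in a..b, f'' x = 0 := by
  rw [integral_eq_sub_of_hasDerivWithinAt_Icc hab hf.hasDerivWithinAt_deriv
    hf.continuousOn_deriv2, hf.deriv_left, hf.deriv_right, sub_zero]

theorem integral_mul_deriv2_nonpos (hf : IsNeumannC2 a b f f' f'') (hab : a ≤ b) :
    ∫ x in a..b, f x * f'' x ≤ 0 := by
  have hd := hf.hasDerivWithinAt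
  have hd' := hf.hasDerivWithinAt_deriv
  rw [← uIcc_of_le hab] at hd hd'
  rw [integral_mul_deriv_eq_deriv_mul_of_hasDerivWithinAt hd hd'
    (hf.continuousOn_deriv.intervalIntegrable_of_Icc hab)
    (hf.continuousOn_deriv2.intervalIntegrable_of_Icc hab), hf.deriv_left, hf.deriv_right]
  simpa using integral_nonneg hab fun x _ => mul_self_nonneg (f' x)

theorem abs_deriv_le_integral_abs (hf : IsNeumannC2 a b f f' f'') {x : ℝ} (hx : x ∈ Icc a b) :
    |f' x| ≤ ∫ t in a..b, |f'' t| := by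
  have hsub : Icc a x ⊆ Icc a b := Icc_subset_Icc_right hx.2
  have hftc : ∫ t in a..x, f'' t = f' x := by
    rw [integral_eq_sub_of_hasDerivWithinAt_Icc hx.1
      (fun t ht => (hf.hasDerivWithinAt_deriv t (hsub ht)).mono hsub)
      (hf.continuousOn_deriv2.mono hsub), hf.deriv_left, sub_zero]
  calc |f' x| = |∫ t in a..x, f'' t| := by rw [hftc]
    _ ≤ ∫ t in a..x, |f'' t| := abs_integral_le_integral_abs hx.1
    _ ≤ ∫ t in a..b, |f'' t| :=
      integral_mono_interval le_rfl hx.1 hx.2 (.of_forall fun t => abs_nonneg _)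
        (hf.continuousOn_deriv2.abs.intervalIntegrable_of_Icc (hx.1.trans hx.2))

theorem lipschitzOnWith (hf : IsNeumannC2 a b f f' f'') :
    LipschitzOnWith (Real.toNNReal (∫ t in a..b, |f'' t|)) f (Icc a b) :=
  (convex_Icc a b).lipschitzOnWith_of_nnnorm_hasDerivWithin_le hf.hasDerivWithinAt fun x hx => by
    rw [← NNReal.coe_le_coe, coe_nnnorm, Real.norm_eq_abs]
    exact (hf.abs_deriv_le_integral_abs hx).trans (Real.le_coe_toNNReal _)

theorem deriv_eq_zero_of_isMinOn (hf : IsNeumannC2 a b f f' f'') {c : ℝ} (hc : c ∈ Icc a b)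
    (hmin : IsMinOn f (Icc a b) c) : f' c = 0 := by
  rcases hc.1.eq_or_lt with rfl | hac
  · exact hf.deriv_left
  rcases hc.2.eq_or_lt with rfl | hcb
  · exact hf.deriv_right
  exact (hmin.isLocalMin (Icc_mem_nhds hac hcb)).hasDerivAt_eq_zero
    ((hf.hasDerivWithinAt c hc).hasDerivAt (Icc_mem_nhds hac hcb))

theorem deriv2_nonneg_of_isMinOn (hf : IsNeumannC2 a b f f' f'') (hab : a < b) {c : ℝ}
    (hc : c ∈ Icc a b) (hmin : IsMinOn f (Icc a b) c) : 0 ≤ f'' c := by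
  by_contra! hneg
  obtain ⟨ε, hε, hsign⟩ :=
    (hf.hasDerivWithinAt_deriv c hc).exists_mul_sub_neg (hf.deriv_eq_zero_of_isMinOn hc hmin) hneg
  rcases hc.2.lt_or_eq with hcb | hcb
  · set z := min b (c + ε / 2)
    have hcz : c < z := lt_min hcb (by linarith)
    have hsub : Icc c z ⊆ Icc a b := Icc_subset_Icc hc.1 (min_le_left _ _)
    have hanti : StrictAntiOn f (Icc c z) := by
      refine strictAntiOn_of_hasDerivWithinAt_neg (convex_Icc c z) (hf.continuousOn.mono hsub)
        (fun x hx => (hf.hasDerivWithinAt x (hsub (interior_subset hx))).mono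
          (interior_subset.trans hsub)) fun x hx => ?_
      rw [interior_Icc] at hx
      have hxz : x < c + ε / 2 := hx.2.trans_le (min_le_right _ _)
      refine neg_of_mul_neg_left (hsign x (hsub (Ioo_subset_Icc_self hx)) hx.1.ne' ?_)
        (sub_nonneg.2 hx.1.le)
      rw [Real.dist_eq, abs_lt]; constructor <;> linarith [hx.1]
    exact (hanti ⟨le_rfl, hcz.le⟩ ⟨hcz.le, le_rfl⟩ hcz).not_ge (hmin (hsub ⟨hcz.le, le_rfl⟩))
  · set z := max a (c - ε / 2)
    have hzc : z < c := max_lt (hcb ▸ hab) (by linarith)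
    have hsub : Icc z c ⊆ Icc a b := Icc_subset_Icc (le_max_left _ _) hc.2
    have hmono : StrictMonoOn f (Icc z c) := by
      refine strictMonoOn_of_hasDerivWithinAt_pos (convex_Icc z c) (hf.continuousOn.mono hsub)
        (fun x hx => (hf.hasDerivWithinAt x (hsub (interior_subset hx))).mono
          (interior_subset.trans hsub)) fun x hx => ?_
      rw [interior_Icc] at hx
      have hxz : c - ε / 2 < x := (le_max_right _ _).trans_lt hx.1
      refine pos_of_mul_neg_left (hsign x (hsub (Ioo_subset_Icc_self hx)) hx.2.ne ?_)
        (sub_nonpos.2 hx.2.le)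
      rw [Real.dist_eq, abs_lt]; constructor <;> linarith [hx.2]
    exact (hmono ⟨le_rfl, hzc.le⟩ ⟨hzc.le, le_rfl⟩ hzc).not_ge (hmin (hsub ⟨le_rfl, hzc.le⟩))

end IsNeumannC2

theorem exists_strictMono_tendstoUniformlyOn_of_lipschitzOnWith {X Y : Type*}
    [PseudoMetricSpace X] [MetricSpace Y] {s : Set X} {t : Set Y} (hs : IsCompact s)
    (ht : IsCompact t) {F : ℕ → X → Y} {K : ℝ≥0} (hFt : ∀ n, MapsTo (F n) s t)
    (hF : ∀ n, LipschitzOnWith K (F n) s) :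
    ∃ φ : ℕ → ℕ, StrictMono φ ∧ ∃ G : X → Y, ContinuousOn G s ∧ MapsTo G s t ∧
      TendstoUniformlyOn (fun n => F (φ n)) G atTop s := by
  have : CompactSpace s := isCompact_iff_compactSpace.mp hs
  let f : ℕ → BoundedContinuousFunction s Y := fun n =>
    BoundedContinuousFunction.mkOfCompact ⟨fun x => F n x, (hF n).to_restrict.continuous⟩
  have hA : IsCompact (closure (range f)) :=
    BoundedContinuousFunction.arzela_ascoli t ht _ (by rintro _ x ⟨n, rfl⟩; exact hFt n x.2)
      (LipschitzWith.uniformEquicontinuous _ K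
        (by rintro ⟨_, n, rfl⟩; exact (hF n).to_restrict)).equicontinuous
  obtain ⟨g, -, φ, hφ, hlim⟩ := hA.tendsto_subseq fun n => subset_closure (mem_range_self n)
  have hunif : TendstoUniformly (fun n (x : s) => F (φ n) x) g atTop :=
    BoundedContinuousFunction.tendsto_iff_tendstoUniformly.1 hlim
  set G := Function.extend ((↑) : s → X) g (F 0)
  have hG : G ∘ (↑) = ⇑g := funext fun x => Subtype.val_injective.extend_apply _ _ x
  refine ⟨φ, hφ, G, ?_, fun x hx => ?_, ?_⟩
  · rw [continuousOn_iff_continuous_domRestrict, domRestrict_eq, hG]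
    exact g.continuous
  · rw [show G x = g ⟨x, hx⟩ from congrFun hG ⟨x, hx⟩]
    exact ht.isClosed.mem_of_tendsto (hunif.tendsto_at _) (.of_forall fun n => hFt _ hx)
  · rw [tendstoUniformlyOn_iff_tendstoUniformly_comp_coe, hG]
    exact hunif

theorem TendstoUniformlyOn.eqOn_of_tendsto_integral_sq_sub {F : ℕ → ℝ → ℝ} {G g : ℝ → ℝ}
    (hFG : TendstoUniformlyOn F G atTop (Icc a b)) (hab : a < b)
    (hF : ∀ n, ContinuousOn (F n) (Icc a b)) (hg : ContinuousOn g (Icc a b))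
    (hint : Tendsto (fun n => ∫ x in a..b, (F n x - g x) ^ 2) atTop (𝓝 0)) :
    EqOn G g (Icc a b) := by
  have hGc : ContinuousOn G (Icc a b) := hFG.continuousOn (.of_forall hF)
  intro x₁ hx₁
  by_contra hne
  have hd : 0 < |G x₁ - g x₁| := abs_pos.2 (sub_ne_zero.2 hne)
  obtain ⟨c, hc, hcd⟩ : ∃ c, 0 < c ∧ c < |G x₁ - g x₁| := ⟨_, half_pos hd, half_lt_self hd⟩
  obtain ⟨a', b', hab', hsub, hfar⟩ := exists_Icc_subset_forall_lt hab hx₁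
    ((show ContinuousOn (fun x => |G x - g x|) (Icc a b) from (hGc.sub hg).abs) x₁ hx₁) hcd
  obtain ⟨n, hnear, hsmall⟩ :=
    ((Metric.tendstoUniformlyOn_iff.1 hFG (c / 2) (by positivity)).and (hint.eventually_lt_const
      (mul_pos (sub_pos.2 hab') (by positivity : 0 < (c / 2) ^ 2)))).exists
  have hFc : ContinuousOn (fun x => (F n x - g x) ^ 2) (Icc a b) := ((hF n).sub hg).pow 2
  have hpt : ∀ x ∈ Icc a' b', (c / 2) ^ 2 ≤ (F n x - g x) ^ 2 := by
    intro x hx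
    have h := hnear x (hsub hx)
    rw [Real.dist_eq] at h
    have : c / 2 ≤ |F n x - g x| := by
      linarith [hfar x hx, abs_sub_le (G x) (F n x) (g x)]
    rw [← sq_abs (F n x - g x)]
    exact pow_le_pow_left₀ (by positivity) this 2
  obtain ⟨haa', hb'b⟩ := (Icc_subset_Icc_iff hab'.le).1 hsub
  have : (b' - a') * (c / 2) ^ 2 ≤ ∫ x in a..b, (F n x - g x) ^ 2 :=
    calc (b' - a') * (c / 2) ^ 2 = ∫ _ in a'..b', (c / 2) ^ 2 := by simp
      _ ≤ ∫ x in a'..b', (F n x - g x) ^ 2 :=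
        integral_mono_on hab'.le intervalIntegrable_const
          ((hFc.mono hsub).intervalIntegrable_of_Icc hab'.le) hpt
      _ ≤ ∫ x in a..b, (F n x - g x) ^ 2 :=
        integral_mono_interval haa' hab'.le hb'b (.of_forall fun x => sq_nonneg _)
          (hFc.intervalIntegrable_of_Icc hab.le)
  linarith

theorem le_max_div_of_mul_one_add_le {s l g β t : ℝ} (hβ : 0 < β) (ht : 0 ≤ t)
    (h : s * (1 + β * t) ≤ l + g * t) : s ≤ max l (g / β) := by
  have hg : g ≤ max l (g / β) * β := (div_le_iff₀ hβ).1 (le_max_right _ _)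
  refine le_of_mul_le_mul_right ?_ (by positivity : 0 < 1 + β * t)
  nlinarith [le_max_left l (g / β), mul_le_mul_of_nonneg_right hg ht]

theorem min_div_le_of_le_mul_one_add {s l g β t : ℝ} (hβ : 0 < β) (ht : 0 ≤ t)
    (h : l + g * t ≤ s * (1 + β * t)) : min l (g / β) ≤ s := by
  have hg : min l (g / β) * β ≤ g := (le_div_iff₀ hβ).1 (min_le_right _ _)
  refine le_of_mul_le_mul_right ?_ (by positivity : 0 < 1 + β * t)
  nlinarith [min_le_left l (g / β), mul_le_mul_of_nonneg_right hg ht]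

structure IsSISEquilibrium (dS dI : ℝ) (Λ β γ μ S S' S'' I I' I'' : ℝ → ℝ) : Prop where
  neumann_S : IsNeumannC2 0 1 S S' S''
  neumann_I : IsNeumannC2 0 1 I I' I''
  I_pos : ∀ x ∈ Icc (0 : ℝ) 1, 0 < I x
  eq_S : ∀ x ∈ Icc (0 : ℝ) 1, -dS * S'' x = Λ x - S x - β x * S x * I x + γ x * I x
  eq_I : ∀ x ∈ Icc (0 : ℝ) 1, -dI * I'' x = β x * S x * I x - (γ x + μ x) * I x

namespace IsSISEquilibrium

variable {dS dI : ℝ} {Λ β γ μ S S' S'' I I' I'' : ℝ → ℝ}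

theorem integral_S_add_integral_mul_I (h : IsSISEquilibrium dS dI Λ β γ μ S S' S'' I I' I'')
    (hΛ : ContinuousOn Λ (Icc 0 1)) (hμ : ContinuousOn μ (Icc 0 1)) :
    (∫ x in (0 : ℝ)..1, S x) + ∫ x in (0 : ℝ)..1, μ x * I x = ∫ x in (0 : ℝ)..1, Λ x := by
  have hS := h.neumann_S.continuousOn
  have hI := h.neumann_I.continuousOn
  have hint : ∀ {f : ℝ → ℝ}, ContinuousOn f (Icc 0 1) →
      IntervalIntegrable f MeasureTheory.volume 0 1 :=
    fun hf => hf.intervalIntegrable_of_Icc zero_le_one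
  have hsum : ∫ x in (0 : ℝ)..1, (-dS * S'' x + -dI * I'' x) = 0 := by
    rw [integral_add (f := fun x => -dS * S'' x) (g := fun x => -dI * I'' x)
      (hint (continuousOn_const.mul h.neumann_S.continuousOn_deriv2))
      (hint (continuousOn_const.mul h.neumann_I.continuousOn_deriv2)), integral_const_mul,
      integral_const_mul, h.neumann_S.integral_deriv2 zero_le_one,
      h.neumann_I.integral_deriv2 zero_le_one]
    ring
  -- adding the two equations cancels the infection terms `β S I` and `γ I`
  rw [integral_congr (g := fun x => Λ x - S x - μ x * I x) fun x hx => by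
    rw [uIcc_of_le zero_le_one] at hx
    simp only [h.eq_S x hx, h.eq_I x hx]
    ring] at hsum
  rw [integral_sub (f := fun x => Λ x - S x) (g := fun x => μ x * I x)
    ((hint hΛ).sub (hint hS)) (hint (hμ.mul hI)),
    integral_sub (hint hΛ) (hint hS)] at hsum
  linarith

theorem mapsTo_S (h : IsSISEquilibrium dS dI Λ β γ μ S S' S'' I I' I'') (hdS : 0 < dS)
    (hβ : ∀ x ∈ Icc (0 : ℝ) 1, 0 < β x) {δ M : ℝ}
    (hδ : ∀ x ∈ Icc (0 : ℝ) 1, δ ≤ min (Λ x) (γ x / β x))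
    (hM : ∀ x ∈ Icc (0 : ℝ) 1, max (Λ x) (γ x / β x) ≤ M) :
    MapsTo S (Icc 0 1) (Icc δ M) := by
  obtain ⟨c, hc, hmin⟩ :=
    isCompact_Icc.exists_isMinOn (nonempty_Icc.2 zero_le_one) h.neumann_S.continuousOn
  obtain ⟨d, hd, hmax⟩ :=
    isCompact_Icc.exists_isMaxOn (nonempty_Icc.2 zero_le_one) h.neumann_S.continuousOn
  have hc'' := h.neumann_S.deriv2_nonneg_of_isMinOn zero_lt_one hc hmin
  have hd'' := h.neumann_S.neg.deriv2_nonneg_of_isMinOn zero_lt_one hd hmax.neg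
  -- the sign of `S''` at the extrema turns the `S`-equation into `S (1 + β I) ≷ Λ + γ I`
  intro x hx
  constructor
  · calc δ ≤ min (Λ c) (γ c / β c) := hδ c hc
      _ ≤ S c := min_div_le_of_le_mul_one_add (hβ c hc) (h.I_pos c hc).le
          (by nlinarith [h.eq_S c hc, mul_nonneg hdS.le hc''])
      _ ≤ S x := hmin hx
  · calc S x ≤ S d := hmax hx
      _ ≤ max (Λ d) (γ d / β d) := le_max_div_of_mul_one_add_le (hβ d hd) (h.I_pos d hd).le
          (by nlinarith [h.eq_S d hd, mul_nonneg hdS.le hd''])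
      _ ≤ M := hM d hd

theorem mul_integral_I_le (h : IsSISEquilibrium dS dI Λ β γ μ S S' S'' I I' I'')
    (hΛ : ContinuousOn Λ (Icc 0 1)) (hμ : ContinuousOn μ (Icc 0 1))
    (hS : ∀ x ∈ Icc (0 : ℝ) 1, 0 ≤ S x) {m : ℝ} (hm : ∀ x ∈ Icc (0 : ℝ) 1, m ≤ μ x) :
    m * ∫ x in (0 : ℝ)..1, I x ≤ ∫ x in (0 : ℝ)..1, Λ x := by
  have hI := h.neumann_I.continuousOn
  calc m * ∫ x in (0 : ℝ)..1, I x = ∫ x in (0 : ℝ)..1, m * I x := (integral_const_mul _ _).symm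
    _ ≤ ∫ x in (0 : ℝ)..1, μ x * I x :=
      integral_mono_on zero_le_one
        ((continuousOn_const.mul hI).intervalIntegrable_of_Icc zero_le_one)
        ((hμ.mul hI).intervalIntegrable_of_Icc zero_le_one)
        fun x hx => mul_le_mul_of_nonneg_right (hm x hx) (h.I_pos x hx).le
    _ ≤ (∫ x in (0 : ℝ)..1, S x) + ∫ x in (0 : ℝ)..1, μ x * I x :=
      le_add_of_nonneg_left (integral_nonneg zero_le_one hS)
    _ = ∫ x in (0 : ℝ)..1, Λ x := h.integral_S_add_integral_mul_I hΛ hμ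

theorem integral_abs_deriv2_S_le (h : IsSISEquilibrium dS dI Λ β γ μ S S' S'' I I' I'')
    (hdS : 0 < dS) {M C : ℝ} (hSM : ∀ x ∈ Icc (0 : ℝ) 1, |S x| ≤ M)
    (hC : ∀ x ∈ Icc (0 : ℝ) 1, |Λ x| + M + (|γ x| + |β x| * M) ≤ C) :
    ∫ x in (0 : ℝ)..1, |S'' x| ≤ C * (1 + ∫ x in (0 : ℝ)..1, I x) / dS := by
  have hI := h.neumann_I.continuousOn
  have hpt : ∀ x ∈ Icc (0 : ℝ) 1, |S'' x| ≤ (C + C * I x) / dS := by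
    intro x hx
    have hIx := h.I_pos x hx
    have hM : 0 ≤ M := (abs_nonneg _).trans (hSM x hx)
    have hβS : |β x| * |S x| ≤ |β x| * M := mul_le_mul_of_nonneg_left (hSM x hx) (abs_nonneg _)
    have hΛS : |Λ x - S x| ≤ C := (abs_sub _ _).trans
      (by linarith [hC x hx, hSM x hx, abs_nonneg (γ x), mul_nonneg (abs_nonneg (β x)) hM])
    have hγS : |γ x - β x * S x| ≤ C := (abs_sub _ _).trans
      (by rw [abs_mul]; linarith [hC x hx, abs_nonneg (Λ x)])
    rw [le_div_iff₀ hdS]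
    calc |S'' x| * dS = |Λ x - S x + (γ x - β x * S x) * I x| := by
          rw [← abs_of_pos hdS, ← abs_mul, ← abs_neg]
          congr 1
          linear_combination h.eq_S x hx
      _ ≤ |Λ x - S x| + |γ x - β x * S x| * I x := by
          rw [← abs_of_pos hIx, ← abs_mul, abs_of_pos hIx]
          exact abs_add_le _ _
      _ ≤ C + C * I x := add_le_add hΛS (mul_le_mul_of_nonneg_right hγS hIx.le)
  calc ∫ x in (0 : ℝ)..1, |S'' x| ≤ ∫ x in (0 : ℝ)..1, (C + C * I x) / dS :=
        integral_mono_on zero_le_one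
          (h.neumann_S.continuousOn_deriv2.abs.intervalIntegrable_of_Icc zero_le_one)
          (((continuousOn_const.add (continuousOn_const.mul hI)).div_const _
            ).intervalIntegrable_of_Icc zero_le_one) hpt
    _ = C * (1 + ∫ x in (0 : ℝ)..1, I x) / dS := by
        rw [integral_div, integral_add (f := fun _ => C) (g := fun x => C * I x)
          intervalIntegrable_const
          ((continuousOn_const.mul hI).intervalIntegrable_of_Icc zero_le_one), integral_const_mul]
        simp only [integral_const, sub_zero, smul_eq_mul, one_mul]
        ring

theorem integral_sq_sub_le (h : IsSISEquilibrium dS dI Λ β γ μ S S' S'' I I' I'')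
    (hdS : 0 < dS) (hβ : ContinuousOn β (Icc 0 1)) (hγ : ContinuousOn γ (Icc 0 1))
    {St St' St'' : ℝ → ℝ} (hSt : IsNeumannC2 0 1 St St' St'')
    (heqSt : ∀ x ∈ Icc (0 : ℝ) 1, -dS * St'' x = Λ x - St x) :
    ∫ x in (0 : ℝ)..1, (S x - St x) ^ 2
      ≤ ∫ x in (0 : ℝ)..1, (γ x - β x * S x) * I x * (S x - St x) := by
  have hv := h.neumann_S.sub hSt
  have hS := h.neumann_S.continuousOn
  -- `v = S - St` solves `dS v'' = v - (γ - β S) I`; test it against `v`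
  have key : ∫ x in (0 : ℝ)..1, ((S x - St x) ^ 2 - (γ x - β x * S x) * I x * (S x - St x))
      = dS * ∫ x in (0 : ℝ)..1, (S x - St x) * (S'' x - St'' x) := by
    rw [← integral_const_mul]
    refine integral_congr fun x hx => ?_
    rw [uIcc_of_le zero_le_one] at hx
    linear_combination (S x - St x) * (h.eq_S x hx - heqSt x hx)
  rw [integral_sub (f := fun x => (S x - St x) ^ 2)
    (g := fun x => (γ x - β x * S x) * I x * (S x - St x))
    ((hv.continuousOn.pow 2).intervalIntegrable_of_Icc zero_le_one)
    ((((hγ.sub (hβ.mul hS)).mul h.neumann_I.continuousOn).mul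
      hv.continuousOn).intervalIntegrable_of_Icc zero_le_one)] at key
  linarith [mul_nonpos_of_nonneg_of_nonpos hdS.le (hv.integral_mul_deriv2_nonpos zero_le_one)]

theorem mul_integral_sq_le_of_le_on_Icc (h : IsSISEquilibrium dS dI Λ β γ μ S S' S'' I I' I'')
    (hdI : 0 ≤ dI) (hβ : ContinuousOn β (Icc 0 1)) (hγ : ContinuousOn γ (Icc 0 1))
    (hμ : ContinuousOn μ (Icc 0 1)) {c : ℝ} (hab : a ≤ b) (hsub : Icc a b ⊆ Icc 0 1)
    (hc : ∀ x ∈ Icc a b, c ≤ β x * S x - (γ x + μ x)) :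
    c * ∫ x in a..b, ((x - a) * (b - x)) ^ 2 ≤ dI * ∫ x in a..b, (b - x - (x - a)) ^ 2 := by
  have hp : ∀ x ∈ Icc a b,
      HasDerivWithinAt (fun x => (x - a) * (b - x)) (b - x - (x - a)) (Icc a b) x :=
    fun x _ => (((hasDerivAt_id' x).sub_const a).mul
      ((hasDerivAt_id' x).const_sub b)).hasDerivWithinAt.congr_deriv (by ring)
  have hpc : Continuous fun x : ℝ => (x - a) * (b - x) := by fun_prop
  have hIa : ∀ x ∈ Icc a b, HasDerivWithinAt I (I' x) (Icc a b) x :=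
    fun x hx => (h.neumann_I.hasDerivWithinAt x (hsub hx)).mono hsub
  have hIa' : ∀ x ∈ Icc a b, HasDerivWithinAt I' (I'' x) (Icc a b) x :=
    fun x hx => (h.neumann_I.hasDerivWithinAt_deriv x (hsub hx)).mono hsub
  have hpicone := neg_integral_sq_le_integral_deriv2_div_mul_sq hab hIa hIa'
    (h.neumann_I.continuousOn_deriv2.mono hsub) (fun x hx => h.I_pos x (hsub hx)) hp
    (by fun_prop) (by simp) (by simp)
  have hS := h.neumann_S.continuousOn
  -- on `[0, 1]` the `I`-equation reads `β S - (γ + μ) = -dI I'' / I`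
  calc c * ∫ x in a..b, ((x - a) * (b - x)) ^ 2
      = ∫ x in a..b, c * ((x - a) * (b - x)) ^ 2 := (integral_const_mul _ _).symm
    _ ≤ ∫ x in a..b, (β x * S x - (γ x + μ x)) * ((x - a) * (b - x)) ^ 2 :=
      integral_mono_on hab ((continuous_const.mul (hpc.pow 2)).intervalIntegrable a b)
        ((((hβ.mul hS).sub (hγ.add hμ)).mono hsub).mul (hpc.pow 2).continuousOn
          |>.intervalIntegrable_of_Icc hab)
        fun x hx => mul_le_mul_of_nonneg_right (hc x hx) (sq_nonneg _)
    _ = -dI * ∫ x in a..b, I'' x / I x * ((x - a) * (b - x)) ^ 2 := by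
      rw [← integral_const_mul]
      refine integral_congr fun x hx => ?_
      rw [uIcc_of_le hab] at hx
      have hIx := (h.I_pos x (hsub hx)).ne'
      rw [show -dI * (I'' x / I x * ((x - a) * (b - x)) ^ 2)
          = -dI * I'' x / I x * ((x - a) * (b - x)) ^ 2 by ring, h.eq_I x (hsub hx),
        ← sub_mul, mul_div_cancel_right₀ _ hIx]
    _ ≤ dI * ∫ x in a..b, (b - x - (x - a)) ^ 2 := by
      linarith [mul_le_mul_of_nonneg_left hpicone hdI]

end IsSISEquilibrium

namespace SIS

variable {dS : ℝ} {Λ β γ μ : ℝ → ℝ}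

theorem exists_uniform_bounds (hdS : 0 < dS)
    (hΛc : ContinuousOn Λ (Icc 0 1)) (hβc : ContinuousOn β (Icc 0 1))
    (hγc : ContinuousOn γ (Icc 0 1)) (hμc : ContinuousOn μ (Icc 0 1))
    (hΛ : ∀ x ∈ Icc (0 : ℝ) 1, 0 < Λ x) (hβ : ∀ x ∈ Icc (0 : ℝ) 1, 0 < β x)
    (hγ : ∀ x ∈ Icc (0 : ℝ) 1, 0 < γ x) (hμ : ∀ x ∈ Icc (0 : ℝ) 1, 0 < μ x) :
    ∃ δ M L : ℝ, ∃ K : ℝ≥0, 0 < δ ∧ ∀ {dI : ℝ} {S S' S'' I I' I'' : ℝ → ℝ},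
      IsSISEquilibrium dS dI Λ β γ μ S S' S'' I I' I'' →
        MapsTo S (Icc 0 1) (Icc δ M) ∧ ∫ x in (0 : ℝ)..1, I x ≤ L ∧
          LipschitzOnWith K S (Icc 0 1) := by
  have hne : (Icc (0 : ℝ) 1).Nonempty := nonempty_Icc.2 zero_le_one
  have hρ : ContinuousOn (fun x => γ x / β x) (Icc 0 1) := hγc.div hβc fun x hx => (hβ x hx).ne'
  obtain ⟨x₁, hx₁, hmin⟩ := isCompact_Icc.exists_isMinOn hne
    (hΛc.inf hρ : ContinuousOn (fun x => min (Λ x) (γ x / β x)) (Icc 0 1))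
  obtain ⟨x₂, hx₂, hmax⟩ := isCompact_Icc.exists_isMaxOn hne
    (hΛc.sup hρ : ContinuousOn (fun x => max (Λ x) (γ x / β x)) (Icc 0 1))
  obtain ⟨x₃, hx₃, hμmin⟩ := isCompact_Icc.exists_isMinOn hne hμc
  set δ := min (Λ x₁) (γ x₁ / β x₁)
  set M := max (Λ x₂) (γ x₂ / β x₂)
  set L := (∫ x in (0 : ℝ)..1, Λ x) / μ x₃
  have hδ : 0 < δ := lt_min (hΛ x₁ hx₁) (div_pos (hγ x₁ hx₁) (hβ x₁ hx₁))
  obtain ⟨C, hC⟩ := isCompact_Icc.exists_bound_of_continuousOn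
    (f := fun x => |Λ x| + M + (|γ x| + |β x| * M))
    ((hΛc.abs.add continuousOn_const).add (hγc.abs.add (hβc.abs.mul continuousOn_const)))
  refine ⟨δ, M, L, Real.toNNReal (C * (1 + L) / dS), hδ, @fun dI S S' S'' I I' I'' h => ?_⟩
  have hS := h.mapsTo_S hdS hβ (fun x hx => hmin hx) (fun x hx => hmax hx)
  have hI : ∫ x in (0 : ℝ)..1, I x ≤ L := by
    rw [le_div_iff₀ (hμ x₃ hx₃), mul_comm]
    exact h.mul_integral_I_le hΛc hμc (fun x hx => hδ.le.trans (hS hx).1) fun x hx => hμmin hx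
  refine ⟨hS, hI, h.neumann_S.lipschitzOnWith.weaken (Real.toNNReal_le_toNNReal ?_)⟩
  have hC0 : 0 ≤ C := (norm_nonneg _).trans (hC x₁ hx₁)
  calc ∫ x in (0 : ℝ)..1, |S'' x| ≤ C * (1 + ∫ x in (0 : ℝ)..1, I x) / dS :=
        h.integral_abs_deriv2_S_le hdS
          (fun x hx => abs_le.2 ⟨by linarith [(hS hx).1, (hS hx).2], (hS hx).2⟩)
          fun x hx => (Real.le_norm_self _).trans (hC x hx)
    _ ≤ C * (1 + L) / dS := by gcongr

variable {dI : ℕ → ℝ} {S S' S'' I I' I'' : ℕ → ℝ → ℝ}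

theorem tendsto_integral_sq_sub_of_tendsto_integral_I
    (hE : ∀ k, IsSISEquilibrium dS (dI k) Λ β γ μ (S k) (S' k) (S'' k) (I k) (I' k) (I'' k))
    (hdS : 0 < dS) (hβ : ContinuousOn β (Icc 0 1)) (hγ : ContinuousOn γ (Icc 0 1))
    {St St' St'' : ℝ → ℝ} (hSt : IsNeumannC2 0 1 St St' St'')
    (heqSt : ∀ x ∈ Icc (0 : ℝ) 1, -dS * St'' x = Λ x - St x) {M : ℝ}
    (hSM : ∀ k, MapsTo (S k) (Icc 0 1) (Icc 0 M))
    (hI : Tendsto (fun k => ∫ x in (0 : ℝ)..1, I k x) atTop (𝓝 0)) :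
    Tendsto (fun k => ∫ x in (0 : ℝ)..1, (S k x - St x) ^ 2) atTop (𝓝 0) := by
  obtain ⟨C, hC⟩ := isCompact_Icc.exists_bound_of_continuousOn
    (f := fun x => (|γ x| + |β x| * M) * (M + |St x|))
    ((hγ.abs.add (hβ.abs.mul continuousOn_const)).mul (continuousOn_const.add hSt.continuousOn.abs))
  refine squeeze_zero (fun k => integral_nonneg zero_le_one fun x _ => sq_nonneg _) (fun k => ?_)
    (by simpa using hI.const_mul C)
  have hIk := (hE k).neumann_I.continuousOn
  have hSk := (hE k).neumann_S.continuousOn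
  calc ∫ x in (0 : ℝ)..1, (S k x - St x) ^ 2
      ≤ ∫ x in (0 : ℝ)..1, (γ x - β x * S k x) * I k x * (S k x - St x) :=
        (hE k).integral_sq_sub_le hdS hβ hγ hSt heqSt
    _ ≤ ∫ x in (0 : ℝ)..1, C * I k x :=
        integral_mono_on zero_le_one
          ((((hγ.sub (hβ.mul hSk)).mul hIk).mul
            (hSk.sub hSt.continuousOn)).intervalIntegrable_of_Icc zero_le_one)
          ((continuousOn_const.mul hIk).intervalIntegrable_of_Icc zero_le_one) fun x hx => ?_
    _ = C * ∫ x in (0 : ℝ)..1, I k x := integral_const_mul _ _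
  have hIx := (hE k).I_pos x hx
  have hSx : |S k x| ≤ M := abs_le.2 ⟨by linarith [(hSM k hx).1, (hSM k hx).2], (hSM k hx).2⟩
  have hM : 0 ≤ M := (abs_nonneg _).trans hSx
  have hfirst : |γ x - β x * S k x| ≤ |γ x| + |β x| * M :=
    (abs_sub _ _).trans (by rw [abs_mul]; gcongr)
  have hsecond : |S k x - St x| ≤ M + |St x| := (abs_sub _ _).trans (by gcongr)
  calc (γ x - β x * S k x) * I k x * (S k x - St x)
      = (γ x - β x * S k x) * (S k x - St x) * I k x := by ring
    _ ≤ |(γ x - β x * S k x) * (S k x - St x)| * I k x :=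
        mul_le_mul_of_nonneg_right (le_abs_self _) hIx.le
    _ ≤ C * I k x := by
        refine mul_le_mul_of_nonneg_right ?_ hIx.le
        rw [abs_mul]
        refine (mul_le_mul hfirst hsecond (abs_nonneg _) (by positivity)).trans ?_
        exact (Real.le_norm_self _).trans (hC x hx)

theorem not_tendstoUniformlyOn_of_lt
    (hE : ∀ k, IsSISEquilibrium dS (dI k) Λ β γ μ (S k) (S' k) (S'' k) (I k) (I' k) (I'' k))
    (hdI : ∀ k, 0 ≤ dI k) (hdI0 : Tendsto dI atTop (𝓝 0))
    (hβ : ContinuousOn β (Icc 0 1)) (hγ : ContinuousOn γ (Icc 0 1))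
    (hμ : ContinuousOn μ (Icc 0 1)) {St : ℝ → ℝ} (hSt : ContinuousOn St (Icc 0 1)) {x₀ : ℝ}
    (hx₀ : x₀ ∈ Icc (0 : ℝ) 1) (hlt : γ x₀ + μ x₀ < β x₀ * St x₀) :
    ¬ TendstoUniformlyOn S St atTop (Icc 0 1) := by
  intro hconv
  obtain ⟨c, hc, hcg⟩ : ∃ c, 0 < c ∧ 2 * c < β x₀ * St x₀ - (γ x₀ + μ x₀) :=
    ⟨(β x₀ * St x₀ - (γ x₀ + μ x₀)) / 4, by linarith, by linarith⟩
  obtain ⟨a, b, hab, hsub, hgab⟩ := exists_Icc_subset_forall_lt zero_lt_one hx₀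
    ((show ContinuousOn (fun x => β x * St x - (γ x + μ x)) (Icc 0 1) from
      (hβ.mul hSt).sub (hγ.add hμ)) x₀ hx₀) hcg
  obtain ⟨B, hB⟩ := isCompact_Icc.exists_bound_of_continuousOn hβ
  set P := ∫ x in a..b, ((x - a) * (b - x)) ^ 2
  set Q := ∫ x in a..b, (b - x - (x - a)) ^ 2
  have hP : 0 < P := intervalIntegral_pos_of_pos_on
    ((by fun_prop : Continuous fun x : ℝ => ((x - a) * (b - x)) ^ 2).intervalIntegrable a b)
    (fun x hx => pow_pos (mul_pos (sub_pos.2 hx.1) (sub_pos.2 hx.2)) 2) hab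
  obtain ⟨k, hk, hdk⟩ :=
    ((Metric.tendstoUniformlyOn_iff.1 hconv (c / (|B| + 1)) (by positivity)).and
      ((hdI0.mul_const Q).eventually_lt_const (by simpa using mul_pos hc hP))).exists
  have hcoef : ∀ x ∈ Icc a b, c ≤ β x * S k x - (γ x + μ x) := by
    intro x hx
    have hclose := hk x (hsub hx)
    rw [Real.dist_eq] at hclose
    have hβx : |β x| ≤ |B| + 1 := by
      linarith [(Real.norm_eq_abs _).symm.trans_le (hB x (hsub hx)), le_abs_self B]
    have hpert : |β x * (St x - S k x)| ≤ c := by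
      rw [abs_mul]
      calc |β x| * |St x - S k x| ≤ (|B| + 1) * (c / (|B| + 1)) :=
            mul_le_mul hβx hclose.le (abs_nonneg _) (by positivity)
        _ = c := by field_simp
    have hsplit : β x * S k x = β x * St x - β x * (St x - S k x) := by ring
    linarith [hgab x hx, le_abs_self (β x * (St x - S k x))]
  have := (hE k).mul_integral_sq_le_of_le_on_Icc (hdI k) hβ hγ hμ hab.le hsub hcoef
  linarith

end SIS

theorem stmt_15_general (dS : ℝ) (hdS : 0 < dS)
    (Λ β γ μ : ℝ → ℝ)
    (hΛc : ContinuousOn Λ (Set.Icc 0 1)) (hβc : ContinuousOn β (Set.Icc 0 1))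
    (hγc : ContinuousOn γ (Set.Icc 0 1)) (hμc : ContinuousOn μ (Set.Icc 0 1))
    (hΛpos : ∀ x ∈ Set.Icc (0 : ℝ) 1, 0 < Λ x)
    (hβpos : ∀ x ∈ Set.Icc (0 : ℝ) 1, 0 < β x)
    (hγpos : ∀ x ∈ Set.Icc (0 : ℝ) 1, 0 < γ x)
    (hμpos : ∀ x ∈ Set.Icc (0 : ℝ) 1, 0 < μ x)
    -- the disease-free steady state S̃
    (St St' St'' : ℝ → ℝ)
    (hSt1 : ∀ x ∈ Set.Icc (0 : ℝ) 1, HasDerivWithinAt St (St' x) (Set.Icc 0 1) x)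
    (hSt2 : ∀ x ∈ Set.Icc (0 : ℝ) 1, HasDerivWithinAt St' (St'' x) (Set.Icc 0 1) x)
    (hStc : ContinuousOn St'' (Set.Icc 0 1))
    (hbcSt0 : St' 0 = 0) (hbcSt1 : St' 1 = 0)
    (heqSt : ∀ x ∈ Set.Icc (0 : ℝ) 1, -dS * St'' x = Λ x - St x)
    (hx0 : ∃ x₀ ∈ Set.Icc (0 : ℝ) 1, γ x₀ + μ x₀ < β x₀ * St x₀)
    -- the sequence of diffusion rates dₙ → 0
    (dI : ℕ → ℝ) (hdI : ∀ n, 0 < dI n)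
    (hdI0 : Filter.Tendsto dI Filter.atTop (nhds 0))
    -- the corresponding endemic equilibria (Sₙ, Iₙ)
    (S S' S'' I I' I'' : ℕ → ℝ → ℝ)
    (hS1 : ∀ n, ∀ x ∈ Set.Icc (0 : ℝ) 1,
      HasDerivWithinAt (S n) (S' n x) (Set.Icc 0 1) x)
    (hS2 : ∀ n, ∀ x ∈ Set.Icc (0 : ℝ) 1,
      HasDerivWithinAt (S' n) (S'' n x) (Set.Icc 0 1) x)
    (hS''c : ∀ n, ContinuousOn (S'' n) (Set.Icc 0 1))
    (hI1 : ∀ n, ∀ x ∈ Set.Icc (0 : ℝ) 1,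
      HasDerivWithinAt (I n) (I' n x) (Set.Icc 0 1) x)
    (hI2 : ∀ n, ∀ x ∈ Set.Icc (0 : ℝ) 1,
      HasDerivWithinAt (I' n) (I'' n x) (Set.Icc 0 1) x)
    (hI''c : ∀ n, ContinuousOn (I'' n) (Set.Icc 0 1))
    (hIpos : ∀ n, ∀ x ∈ Set.Icc (0 : ℝ) 1, 0 < I n x)
    (hbcS0 : ∀ n, S' n 0 = 0) (hbcS1 : ∀ n, S' n 1 = 0)
    (hbcI0 : ∀ n, I' n 0 = 0) (hbcI1 : ∀ n, I' n 1 = 0)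
    (heqS : ∀ n, ∀ x ∈ Set.Icc (0 : ℝ) 1,
      -dS * S'' n x = Λ x - S n x - β x * S n x * I n x + γ x * I n x)
    (heqI : ∀ n, ∀ x ∈ Set.Icc (0 : ℝ) 1,
      -dI n * I'' n x = β x * S n x * I n x - (γ x + μ x) * I n x) :
    ∃ φ : ℕ → ℕ, StrictMono φ ∧
      ∃ S₀ : ℝ → ℝ, ContinuousOn S₀ (Set.Icc 0 1) ∧
        (∀ x ∈ Set.Icc (0 : ℝ) 1, 0 < S₀ x) ∧
        TendstoUniformlyOn (fun n => S (φ n)) S₀ Filter.atTop (Set.Icc 0 1) ∧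
        ∃ I₀ : ℝ, 0 < I₀ ∧
          Filter.Tendsto (fun n => ∫ x in (0:ℝ)..1, I (φ n) x)
            Filter.atTop (nhds I₀) := by
  have hE : ∀ n, IsSISEquilibrium dS (dI n) Λ β γ μ (S n) (S' n) (S'' n) (I n) (I' n) (I'' n) :=
    fun n => ⟨⟨hS1 n, hS2 n, hS''c n, hbcS0 n, hbcS1 n⟩, ⟨hI1 n, hI2 n, hI''c n, hbcI0 n, hbcI1 n⟩,
      hIpos n, heqS n, heqI n⟩
  have hSt : IsNeumannC2 0 1 St St' St'' := ⟨hSt1, hSt2, hStc, hbcSt0, hbcSt1⟩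
  obtain ⟨δ, M, L, K, hδ, hbd⟩ :=
    SIS.exists_uniform_bounds hdS hΛc hβc hγc hμc hΛpos hβpos hγpos hμpos
  obtain ⟨φ₁, hφ₁, S₀, hS₀c, hS₀δ, hS₀⟩ :=
    exists_strictMono_tendstoUniformlyOn_of_lipschitzOnWith isCompact_Icc isCompact_Icc
      (fun n => (hbd (hE n)).1) fun n => (hbd (hE n)).2.2
  obtain ⟨I₀, hI₀, φ₂, hφ₂, hI⟩ :=
    isCompact_Icc.tendsto_subseq (x := fun k => ∫ x in (0 : ℝ)..1, I (φ₁ k) x) fun k =>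
      ⟨integral_nonneg zero_le_one fun x hx => (hIpos _ x hx).le, (hbd (hE (φ₁ k))).2.1⟩
  have hSφ := hS₀.seq_tendstoUniformlyOn _ hφ₂.tendsto_atTop
  refine ⟨φ₁ ∘ φ₂, hφ₁.comp hφ₂, S₀, hS₀c, fun x hx => hδ.trans_le (hS₀δ hx).1, hSφ, I₀,
    hI₀.1.lt_of_ne fun h0 => ?_, hI⟩
  -- if the infection dies out, `S` converges to the disease-free state, which is unstable at `x₀`
  rw [← h0] at hI
  have hv := SIS.tendsto_integral_sq_sub_of_tendsto_integral_I (fun k => hE (φ₁ (φ₂ k))) hdS hβc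
    hγc hSt heqSt (fun k => (hbd (hE _)).1.mono_right (Icc_subset_Icc hδ.le le_rfl)) hI
  have heq : EqOn S₀ St (Icc 0 1) := hSφ.eqOn_of_tendsto_integral_sq_sub zero_lt_one
    (fun k => (hE _).neumann_S.continuousOn) hSt.continuousOn hv
  obtain ⟨x₀, hx₀, hlt⟩ := hx0
  exact SIS.not_tendstoUniformlyOn_of_lt (fun k => hE (φ₁ (φ₂ k))) (fun k => (hdI _).le)
    (hdI0.comp (hφ₁.comp hφ₂).tendsto_atTop) hβc hγc hμc hSt.continuousOn hx₀ hlt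
    (hSφ.congr_right heq)

/-- Asymptotic profile of endemic equilibria as `d_I → 0` with `d_S > 0` fixed,
on the one-dimensional domain `[0,1]`: along a subsequence, `Sₙ` converges
uniformly to a positive continuous function `S₀`, and the total infected
population `∫₀¹ Iₙ` converges to a positive constant `I₀`. -/
theorem stmt_15 (dS : ℝ) (hdS : 0 < dS)
    (Λ β γ μ : ℝ → ℝ)
    (hΛc : ContinuousOn Λ (Set.Icc 0 1)) (hβc : ContinuousOn β (Set.Icc 0 1))
    (hγc : ContinuousOn γ (Set.Icc 0 1)) (hμc : ContinuousOn μ (Set.Icc 0 1))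
    (hΛpos : ∀ x ∈ Set.Icc (0 : ℝ) 1, 0 < Λ x)
    (hβpos : ∀ x ∈ Set.Icc (0 : ℝ) 1, 0 < β x)
    (hγpos : ∀ x ∈ Set.Icc (0 : ℝ) 1, 0 < γ x)
    (hμpos : ∀ x ∈ Set.Icc (0 : ℝ) 1, 0 < μ x)
    -- the disease-free steady state S̃
    (St St' St'' : ℝ → ℝ)
    (hSt1 : ∀ x ∈ Set.Icc (0 : ℝ) 1, HasDerivWithinAt St (St' x) (Set.Icc 0 1) x)
    (hSt2 : ∀ x ∈ Set.Icc (0 : ℝ) 1, HasDerivWithinAt St' (St'' x) (Set.Icc 0 1) x)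
    (hStc : ContinuousOn St'' (Set.Icc 0 1))
    (hbcSt0 : St' 0 = 0) (hbcSt1 : St' 1 = 0)
    (heqSt : ∀ x ∈ Set.Icc (0 : ℝ) 1, -dS * St'' x = Λ x - St x)
    (hx0 : ∃ x₀ ∈ Set.Icc (0 : ℝ) 1, γ x₀ + μ x₀ < β x₀ * St x₀)
    -- the sequence of diffusion rates dₙ → 0
    (dI : ℕ → ℝ) (hdI : ∀ n, 0 < dI n)
    (hdI0 : Filter.Tendsto dI Filter.atTop (nhds 0))
    -- the corresponding endemic equilibria (Sₙ, Iₙ)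
    (S S' S'' I I' I'' : ℕ → ℝ → ℝ)
    (hS1 : ∀ n, ∀ x ∈ Set.Icc (0 : ℝ) 1,
      HasDerivWithinAt (S n) (S' n x) (Set.Icc 0 1) x)
    (hS2 : ∀ n, ∀ x ∈ Set.Icc (0 : ℝ) 1,
      HasDerivWithinAt (S' n) (S'' n x) (Set.Icc 0 1) x)
    (hS''c : ∀ n, ContinuousOn (S'' n) (Set.Icc 0 1))
    (hI1 : ∀ n, ∀ x ∈ Set.Icc (0 : ℝ) 1,
      HasDerivWithinAt (I n) (I' n x) (Set.Icc 0 1) x)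
    (hI2 : ∀ n, ∀ x ∈ Set.Icc (0 : ℝ) 1,
      HasDerivWithinAt (I' n) (I'' n x) (Set.Icc 0 1) x)
    (hI''c : ∀ n, ContinuousOn (I'' n) (Set.Icc 0 1))
    (hSpos : ∀ n, ∀ x ∈ Set.Icc (0 : ℝ) 1, 0 < S n x)
    (hIpos : ∀ n, ∀ x ∈ Set.Icc (0 : ℝ) 1, 0 < I n x)
    (hbcS0 : ∀ n, S' n 0 = 0) (hbcS1 : ∀ n, S' n 1 = 0)
    (hbcI0 : ∀ n, I' n 0 = 0) (hbcI1 : ∀ n, I' n 1 = 0)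
    (heqS : ∀ n, ∀ x ∈ Set.Icc (0 : ℝ) 1,
      -dS * S'' n x = Λ x - S n x - β x * S n x * I n x + γ x * I n x)
    (heqI : ∀ n, ∀ x ∈ Set.Icc (0 : ℝ) 1,
      -dI n * I'' n x = β x * S n x * I n x - (γ x + μ x) * I n x) :
    ∃ φ : ℕ → ℕ, StrictMono φ ∧
      ∃ S₀ : ℝ → ℝ, ContinuousOn S₀ (Set.Icc 0 1) ∧
        (∀ x ∈ Set.Icc (0 : ℝ) 1, 0 < S₀ x) ∧
        TendstoUniformlyOn (fun n => S (φ n)) S₀ Filter.atTop (Set.Icc 0 1) ∧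
        ∃ I₀ : ℝ, 0 < I₀ ∧
          Filter.Tendsto (fun n => ∫ x in (0:ℝ)..1, I (φ n) x)
            Filter.atTop (nhds I₀) :=
  stmt_15_general dS hdS Λ β γ μ hΛc hβc hγc hμc hΛpos hβpos hγpos hμpos St St' St'' hSt1 hSt2 hStc
    hbcSt0 hbcSt1 heqSt hx0 dI hdI hdI0 S S' S'' I I' I'' hS1 hS2 hS''c hI1 hI2 hI''c hIpos hbcS0
    hbcS1 hbcI0 hbcI1 heqS heqI
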